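/- arXiv:2203.09810 — 8 statements merged into one kernel-verified Lean document; each statement's English description precedes it below -/
import Mathlib

section
/- The oblique projector E_WZ := P_W(I - Z X^{-1} Z^T P_W^perp), where P_W = W W^T, P_W^perp = I - P_W, and X = Z^T P_W^perp Z, satisfies the alternative representation E_WZ = W (W^T P_Z^perp W)^{-1} W^T P_Z^perp, where P_Z = Z Z^T and P_Z^perp = I - P_Z. -/
/-!
With `C = Wᵀ Z`, orthonormality of the columns gives `Y := Wᵀ (1 - Z Zᵀ) W = 1 - C Cᵀ` and
`X = Zᵀ (1 - W Wᵀ) Z = 1 - Cᵀ C`, and the push-through identity `(1 - C Cᵀ) C = C (1 - Cᵀ C)` turns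
`C X⁻¹` into `Y⁻¹ C`. Factoring `W Y⁻¹` out of `W Wᵀ - W Y⁻¹ C Zᵀ (1 - W Wᵀ)` leaves
`Y Wᵀ - C Zᵀ (1 - W Wᵀ)`, which collapses to `Wᵀ (1 - Z Zᵀ)` because `Wᵀ W Wᵀ = Wᵀ`.
-/

open Matrix

namespace Matrix

variable {m n p R : Type*} [CommRing R] [Fintype m] [Fintype p] [DecidableEq m] [DecidableEq n]

theorem transpose_mul_one_sub_mul_transpose_mul {A : Matrix m n R} (hA : Aᵀ * A = 1)
    (B : Matrix m p R) : Aᵀ * (1 - B * Bᵀ) * A = 1 - Aᵀ * B * (Aᵀ * B)ᵀ := by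
  simp only [Matrix.mul_sub, Matrix.sub_mul, Matrix.mul_one, hA, transpose_mul,
    transpose_transpose, Matrix.mul_assoc]

variable [Fintype n]

theorem one_sub_mul_transpose_mul_comm (C : Matrix m n R) :
    (1 - C * Cᵀ) * C = C * (1 - Cᵀ * C) := by
  simp only [Matrix.sub_mul, Matrix.mul_sub, Matrix.one_mul, Matrix.mul_one, Matrix.mul_assoc]

theorem mul_nonsing_inv_eq_nonsing_inv_mul_of_mul_eq {X : Matrix n n R} {Y : Matrix m m R}
    {C : Matrix m n R} (hX : IsUnit X.det) (hY : IsUnit Y.det) (h : Y * C = C * X) :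
    C * X⁻¹ = Y⁻¹ * C :=
  calc C * X⁻¹ = Y⁻¹ * (Y * C * X⁻¹) := by
        rw [Matrix.mul_assoc, nonsing_inv_mul_cancel_left Y _ hY]
    _ = Y⁻¹ * C := by rw [h, mul_nonsing_inv_cancel_right X _ hX]

theorem transpose_mul_one_sub_mul_transpose_mul_transpose_sub {W : Matrix m n R}
    (hW : Wᵀ * W = 1) (Z : Matrix m p R) :
    Wᵀ * (1 - Z * Zᵀ) * W * Wᵀ - Wᵀ * Z * (Zᵀ * (1 - W * Wᵀ)) = Wᵀ * (1 - Z * Zᵀ) := by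
  have hWWW : Wᵀ * (W * Wᵀ) = Wᵀ := by rw [← Matrix.mul_assoc, hW, Matrix.one_mul]
  simp only [Matrix.mul_sub, Matrix.sub_mul, Matrix.mul_one, Matrix.mul_assoc, hWWW]
  abel

end Matrix

theorem oblique_projector_alt_representation_general {N P L : ℕ}
    (W : Matrix (Fin N) (Fin P) ℝ) (Z : Matrix (Fin N) (Fin L) ℝ)
    (hW : Wᵀ * W = 1) (hZ : Zᵀ * Z = 1)
    (hX : IsUnit (Zᵀ * (1 - W * Wᵀ) * Z))
    (hY : IsUnit (Wᵀ * (1 - Z * Zᵀ) * W)) :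
    (W * Wᵀ) * (1 - Z * (Zᵀ * (1 - W * Wᵀ) * Z)⁻¹ * Zᵀ * (1 - W * Wᵀ)) =
      W * (Wᵀ * (1 - Z * Zᵀ) * W)⁻¹ * Wᵀ * (1 - Z * Zᵀ) := by
  set X := Zᵀ * (1 - W * Wᵀ) * Z with hXdef
  set Y := Wᵀ * (1 - Z * Zᵀ) * W with hYdef
  set C := Wᵀ * Z
  have hXC : X = 1 - Cᵀ * C := by
    rw [hXdef, transpose_mul_one_sub_mul_transpose_mul hZ]
    simp only [C, transpose_mul, transpose_transpose]
  have hYC : Y = 1 - C * Cᵀ := transpose_mul_one_sub_mul_transpose_mul hW Z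
  have hYd : IsUnit Y.det := (isUnit_iff_isUnit_det Y).mp hY
  have push : C * X⁻¹ = Y⁻¹ * C :=
    mul_nonsing_inv_eq_nonsing_inv_mul_of_mul_eq ((isUnit_iff_isUnit_det X).mp hX) hYd
      (by rw [hXC, hYC, one_sub_mul_transpose_mul_comm])
  have collapse : Y * Wᵀ - C * (Zᵀ * (1 - W * Wᵀ)) = Wᵀ * (1 - Z * Zᵀ) :=
    transpose_mul_one_sub_mul_transpose_mul_transpose_sub hW Z
  calc (W * Wᵀ) * (1 - Z * X⁻¹ * Zᵀ * (1 - W * Wᵀ))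
      = W * (Wᵀ - C * X⁻¹ * (Zᵀ * (1 - W * Wᵀ))) := by
        simp only [C, Matrix.mul_sub, Matrix.mul_one, Matrix.mul_assoc]
    _ = W * (Y⁻¹ * (Y * Wᵀ - C * (Zᵀ * (1 - W * Wᵀ)))) := by
        rw [push, Matrix.mul_sub Y⁻¹, nonsing_inv_mul_cancel_left Y _ hYd]
        simp only [Matrix.mul_assoc]
    _ = W * Y⁻¹ * Wᵀ * (1 - Z * Zᵀ) := by
        rw [collapse]
        simp only [Matrix.mul_assoc]

theorem oblique_projector_alt_representation {N P L : ℕ}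
    (W : Matrix (Fin N) (Fin P) ℝ) (Z : Matrix (Fin N) (Fin L) ℝ)
    (hW : Wᵀ * W = 1) (hZ : Zᵀ * Z = 1)
    (hrank : (fromCols W Z).rank = P + L)
    (hX : IsUnit (Zᵀ * (1 - W * Wᵀ) * Z))
    (hY : IsUnit (Wᵀ * (1 - Z * Zᵀ) * W)) :
    (W * Wᵀ) * (1 - Z * (Zᵀ * (1 - W * Wᵀ) * Z)⁻¹ * Zᵀ * (1 - W * Wᵀ)) =
      W * (Wᵀ * (1 - Z * Zᵀ) * W)⁻¹ * Wᵀ * (1 - Z * Zᵀ) :=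
  oblique_projector_alt_representation_general W Z hW hZ hX hY
end

section
/- The orthogonal projection onto the column space of D = [W Z] decomposes as the sum of the two oblique projectors: D (D^T D)^{-1} D^T = E_WZ + E_ZW, where E_WZ = W (W^T P_Z^perp W)^{-1} W^T P_Z^perp and E_ZW = Z (Z^T P_W^perp Z)^{-1} Z^T P_W^perp. -/
/-!
Let `E = E_WZ + E_ZW`. Each oblique projector fixes its own range and kills the other one, so
`E D = D` for `D = [W Z]`; and `Wᵀ P_Z^⊥`, `Zᵀ P_W^⊥` are combinations of the rows of `Dᵀ`, so
`E = M Dᵀ` for some `M`. These two properties pin down `D (DᵀD)⁻¹ Dᵀ`: it equals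
`E D (DᵀD)⁻¹ Dᵀ = M Dᵀ D (DᵀD)⁻¹ Dᵀ = E`.
-/

open Matrix

namespace Matrix

variable {R : Type*} [CommRing R] {n p q : Type*} [Fintype n] [Fintype p] [Fintype q]
  [DecidableEq p]

theorem eq_mul_inv_gram_mul_transpose {D : Matrix n p R} {E : Matrix n n R} {M : Matrix n p R}
    (hD : IsUnit (Dᵀ * D)) (hfix : E * D = D) (hE : E = M * Dᵀ) :
    E = D * (Dᵀ * D)⁻¹ * Dᵀ := by
  have hdet := (isUnit_iff_isUnit_det _).mp hD
  calc E = M * (Dᵀ * D * (Dᵀ * D)⁻¹) * Dᵀ := by rw [mul_nonsing_inv _ hdet, Matrix.mul_one, hE]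
    _ = E * D * (Dᵀ * D)⁻¹ * Dᵀ := by rw [hE]; simp only [Matrix.mul_assoc]
    _ = D * (Dᵀ * D)⁻¹ * Dᵀ := by rw [hfix]

variable [DecidableEq n]

/-- The paper's `E_UV`, projecting onto the columns of `U` along those of `V`. -/
noncomputable def obliqueProjector (U : Matrix n p R) (V : Matrix n q R) : Matrix n n R :=
  U * (Uᵀ * (1 - V * Vᵀ) * U)⁻¹ * Uᵀ * (1 - V * Vᵀ)

theorem obliqueProjector_mul_self {U : Matrix n p R} (V : Matrix n q R)
    (hU : IsUnit (Uᵀ * (1 - V * Vᵀ) * U)) : obliqueProjector U V * U = U := by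
  have hdet := (isUnit_iff_isUnit_det _).mp hU
  calc obliqueProjector U V * U = U * ((Uᵀ * (1 - V * Vᵀ) * U)⁻¹ * (Uᵀ * (1 - V * Vᵀ) * U)) := by
        simp only [obliqueProjector, Matrix.mul_assoc]
    _ = U := by rw [nonsing_inv_mul _ hdet, Matrix.mul_one]

variable [DecidableEq q]

theorem obliqueProjector_mul_of_transpose_mul_self (U : Matrix n p R) {V : Matrix n q R}
    (hV : Vᵀ * V = 1) : obliqueProjector U V * V = 0 := by
  have hkill : (1 - V * Vᵀ) * V = 0 := by
    rw [Matrix.sub_mul, Matrix.mul_assoc, hV, Matrix.one_mul, Matrix.mul_one, sub_self]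
  rw [obliqueProjector, Matrix.mul_assoc, hkill, Matrix.mul_zero]

theorem obliqueProjector_add_mul_fromCols {U : Matrix n p R} {V : Matrix n q R}
    (hU : Uᵀ * U = 1) (hV : Vᵀ * V = 1)
    (hUV : IsUnit (Uᵀ * (1 - V * Vᵀ) * U)) (hVU : IsUnit (Vᵀ * (1 - U * Uᵀ) * V)) :
    (obliqueProjector U V + obliqueProjector V U) * fromCols U V = fromCols U V := by
  rw [mul_fromCols, Matrix.add_mul, Matrix.add_mul, obliqueProjector_mul_self V hUV,
    obliqueProjector_mul_of_transpose_mul_self V hU,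
    obliqueProjector_mul_of_transpose_mul_self U hV, obliqueProjector_mul_self U hVU, add_zero, zero_add]

theorem obliqueProjector_add_eq_mul_transpose_fromCols (U : Matrix n p R) (V : Matrix n q R) :
    ∃ M : Matrix n (p ⊕ q) R,
      obliqueProjector U V + obliqueProjector V U = M * (fromCols U V)ᵀ := by
  set K := U * (Uᵀ * (1 - V * Vᵀ) * U)⁻¹
  set K' := V * (Vᵀ * (1 - U * Uᵀ) * V)⁻¹
  refine ⟨fromCols (K - K' * Vᵀ * U) (K' - K * Uᵀ * V), ?_⟩
  rw [transpose_fromCols, fromCols_mul_fromRows, obliqueProjector, obliqueProjector]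
  simp only [Matrix.mul_sub, Matrix.sub_mul, Matrix.mul_one, Matrix.mul_assoc, K, K']
  abel

end Matrix

theorem orthogonal_projector_decomposition_general {N P L : ℕ}
    (W : Matrix (Fin N) (Fin P) ℝ) (Z : Matrix (Fin N) (Fin L) ℝ)
    (hW : Wᵀ * W = 1) (hZ : Zᵀ * Z = 1)
    (hD : IsUnit ((fromCols W Z)ᵀ * fromCols W Z))
    (hYW : IsUnit (Wᵀ * (1 - Z * Zᵀ) * W))
    (hYZ : IsUnit (Zᵀ * (1 - W * Wᵀ) * Z)) :
    fromCols W Z * ((fromCols W Z)ᵀ * fromCols W Z)⁻¹ * (fromCols W Z)ᵀ =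
      W * (Wᵀ * (1 - Z * Zᵀ) * W)⁻¹ * Wᵀ * (1 - Z * Zᵀ) +
      Z * (Zᵀ * (1 - W * Wᵀ) * Z)⁻¹ * Zᵀ * (1 - W * Wᵀ) := by
  obtain ⟨M, hM⟩ := obliqueProjector_add_eq_mul_transpose_fromCols W Z
  exact (eq_mul_inv_gram_mul_transpose hD (obliqueProjector_add_mul_fromCols hW hZ hYW hYZ) hM).symm

theorem orthogonal_projector_decomposition {N P L : ℕ}
    (W : Matrix (Fin N) (Fin P) ℝ) (Z : Matrix (Fin N) (Fin L) ℝ)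
    (hW : Wᵀ * W = 1) (hZ : Zᵀ * Z = 1)
    (hrank : (fromCols W Z).rank = P + L)
    (hD : IsUnit ((fromCols W Z)ᵀ * fromCols W Z))
    (hYW : IsUnit (Wᵀ * (1 - Z * Zᵀ) * W))
    (hYZ : IsUnit (Zᵀ * (1 - W * Wᵀ) * Z)) :
    fromCols W Z * ((fromCols W Z)ᵀ * fromCols W Z)⁻¹ * (fromCols W Z)ᵀ =
      W * (Wᵀ * (1 - Z * Zᵀ) * W)⁻¹ * Wᵀ * (1 - Z * Zᵀ) +
      Z * (Zᵀ * (1 - W * Wᵀ) * Z)⁻¹ * Zᵀ * (1 - W * Wᵀ) :=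
  orthogonal_projector_decomposition_general W Z hW hZ hD hYW hYZ
end

section
/- Every vector y ∈ R^N decomposes as y = E_WZ y + E_ZW y + P_U y, where P_U = I - D(D^T D)^{-1} D^T is the orthogonal projector onto the orthogonal complement of the column space of D = [W Z]. -/
open Matrix

namespace Matrix

variable {R : Type*} [CommRing R] {n p l : Type*}

/-- The paper's `E_WZ`, the oblique projector onto the column space of `W` along that of `Z`. -/
noncomputable def obliqueProj [Fintype n] [Fintype p] [Fintype l] [DecidableEq n]
    [DecidableEq p] (W : Matrix n p R) (Z : Matrix n l R) : Matrix n n R :=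
  W * (Wᵀ * (1 - Z * Zᵀ) * W)⁻¹ * Wᵀ * (1 - Z * Zᵀ)

theorem inv_fromBlocks_one_one [Fintype p] [Fintype l] [DecidableEq p] [DecidableEq l]
    {A : Matrix p l R} {B : Matrix l p R}
    {Q : Matrix p p R} {S : Matrix l l R}
    (hQ : Q * (1 - A * B) = 1) (hS : S * (1 - B * A) = 1) :
    (fromBlocks 1 A B 1)⁻¹ = fromBlocks Q (-(Q * A)) (-(S * B)) S := by
  refine inv_eq_left_inv ?_
  rw [fromBlocks_multiply, ← fromBlocks_one]
  congr 1
  · rwa [Matrix.neg_mul, Matrix.mul_assoc, ← sub_eq_add_neg, ← Matrix.mul_sub]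
  · rw [Matrix.mul_one, add_neg_cancel]
  · rw [Matrix.mul_one, neg_add_cancel]
  · rwa [Matrix.neg_mul, Matrix.mul_assoc, neg_add_eq_sub, ← Matrix.mul_sub]

theorem transpose_fromCols_mul_fromCols_of_orthonormal [Fintype n] [DecidableEq p]
    [DecidableEq l] {W : Matrix n p R} {Z : Matrix n l R}
    (hW : Wᵀ * W = 1) (hZ : Zᵀ * Z = 1) :
    (fromCols W Z)ᵀ * fromCols W Z = fromBlocks 1 (Wᵀ * Z) (Zᵀ * W) 1 := by
  rw [transpose_fromCols, fromRows_mul_fromCols, hW, hZ]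

theorem transpose_mul_one_sub_mul_transpose_mul_s5 [Fintype n] [Fintype l] [DecidableEq n]
    [DecidableEq p] {W : Matrix n p R} (Z : Matrix n l R)
    (hW : Wᵀ * W = 1) : Wᵀ * (1 - Z * Zᵀ) * W = 1 - Wᵀ * Z * (Zᵀ * W) := by
  simp only [Matrix.mul_sub, Matrix.sub_mul, Matrix.mul_one, hW, Matrix.mul_assoc]

theorem inv_transpose_mul_one_sub_mul_transpose_mul [Fintype n] [Fintype p] [Fintype l]
    [DecidableEq n] [DecidableEq p] {W : Matrix n p R} {Z : Matrix n l R}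
    (hW : Wᵀ * W = 1) (h : IsUnit (Wᵀ * (1 - Z * Zᵀ) * W)) :
    (Wᵀ * (1 - Z * Zᵀ) * W)⁻¹ * (1 - Wᵀ * Z * (Zᵀ * W)) = 1 := by
  rw [← transpose_mul_one_sub_mul_transpose_mul_s5 Z hW]
  exact nonsing_inv_mul _ ((isUnit_iff_isUnit_det _).mp h)

/-- The Schur complements of the Gram matrix of `[W Z]` are `Wᵀ P_Z^⊥ W` and `Zᵀ P_W^⊥ Z`,
which makes its inverse explicit. -/
theorem obliqueProj_add_obliqueProj [Fintype n] [Fintype p] [Fintype l] [DecidableEq n]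
    [DecidableEq p] [DecidableEq l] {W : Matrix n p R} {Z : Matrix n l R}
    (hW : Wᵀ * W = 1) (hZ : Zᵀ * Z = 1)
    (hWZ : IsUnit (Wᵀ * (1 - Z * Zᵀ) * W)) (hZW : IsUnit (Zᵀ * (1 - W * Wᵀ) * Z)) :
    obliqueProj W Z + obliqueProj Z W =
      fromCols W Z * ((fromCols W Z)ᵀ * fromCols W Z)⁻¹ * (fromCols W Z)ᵀ := by
  rw [transpose_fromCols_mul_fromCols_of_orthonormal hW hZ,
    inv_fromBlocks_one_one (inv_transpose_mul_one_sub_mul_transpose_mul hW hWZ)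
      (inv_transpose_mul_one_sub_mul_transpose_mul hZ hZW),
    fromCols_mul_fromBlocks, transpose_fromCols, fromCols_mul_fromRows]
  simp only [obliqueProj, Matrix.mul_sub, Matrix.add_mul, Matrix.mul_one, Matrix.mul_neg,
    Matrix.neg_mul, Matrix.mul_assoc]
  abel

end Matrix

theorem vector_decomposition_oblique_general {N P L : ℕ}
    (W : Matrix (Fin N) (Fin P) ℝ) (Z : Matrix (Fin N) (Fin L) ℝ)
    (hW : Wᵀ * W = 1) (hZ : Zᵀ * Z = 1)
    (hYW : IsUnit (Wᵀ * (1 - Z * Zᵀ) * W))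
    (hYZ : IsUnit (Zᵀ * (1 - W * Wᵀ) * Z))
    (y : Fin N → ℝ) :
    y = (W * (Wᵀ * (1 - Z * Zᵀ) * W)⁻¹ * Wᵀ * (1 - Z * Zᵀ)).mulVec y +
        (Z * (Zᵀ * (1 - W * Wᵀ) * Z)⁻¹ * Zᵀ * (1 - W * Wᵀ)).mulVec y +
        (1 - fromCols W Z * ((fromCols W Z)ᵀ * fromCols W Z)⁻¹ *
          (fromCols W Z)ᵀ).mulVec y := by
  show y = obliqueProj W Z *ᵥ y + obliqueProj Z W *ᵥ y +
    (1 - fromCols W Z * ((fromCols W Z)ᵀ * fromCols W Z)⁻¹ * (fromCols W Z)ᵀ) *ᵥ y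
  rw [← add_mulVec, obliqueProj_add_obliqueProj hW hZ hYW hYZ, ← add_mulVec,
    add_sub_cancel, one_mulVec]

theorem vector_decomposition_oblique {N P L : ℕ}
    (W : Matrix (Fin N) (Fin P) ℝ) (Z : Matrix (Fin N) (Fin L) ℝ)
    (hW : Wᵀ * W = 1) (hZ : Zᵀ * Z = 1)
    (hrank : (fromCols W Z).rank = P + L)
    (hD : IsUnit ((fromCols W Z)ᵀ * fromCols W Z))
    (hYW : IsUnit (Wᵀ * (1 - Z * Zᵀ) * W))
    (hYZ : IsUnit (Zᵀ * (1 - W * Wᵀ) * Z))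
    (y : Fin N → ℝ) :
    y = (W * (Wᵀ * (1 - Z * Zᵀ) * W)⁻¹ * Wᵀ * (1 - Z * Zᵀ)).mulVec y +
        (Z * (Zᵀ * (1 - W * Wᵀ) * Z)⁻¹ * Zᵀ * (1 - W * Wᵀ)).mulVec y +
        (1 - fromCols W Z * ((fromCols W Z)ᵀ * fromCols W Z)⁻¹ *
          (fromCols W Z)ᵀ).mulVec y :=
  vector_decomposition_oblique_general W Z hW hZ hYW hYZ y
end

section
/- Let E be an N×N real matrix and A an N×N real matrix such that lim_{i→∞} A^i = E. Then E is idempotent, A E = E, E A = E, and ρ(A - E) < 1. -/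
open Matrix Filter

theorem projector_conditions_of_powers_tendsto {N : ℕ}
    (A E : Matrix (Fin N) (Fin N) ℝ)
    (h : Tendsto (fun i : ℕ => A ^ i) atTop (nhds E)) :
    E * E = E ∧ A * E = E ∧ E * A = E ∧
      spectralRadius ℂ ((A - E).map (algebraMap ℝ ℂ)) < 1 := by
  have h1 : Tendsto (fun i : ℕ => A ^ (i + 1)) atTop (nhds E) :=
    h.comp (tendsto_add_atTop_nat 1)
  have hAE : A * E = E := by
    have h2 : Tendsto (fun i : ℕ => A * A ^ i) atTop (nhds (A * E)) :=
      tendsto_const_nhds.mul h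
    have heq : (fun i : ℕ => A * A ^ i) = fun i : ℕ => A ^ (i + 1) := by
      funext i; rw [pow_succ']
    rw [heq] at h2
    exact tendsto_nhds_unique h2 h1
  have hEA : E * A = E := by
    have h2 : Tendsto (fun i : ℕ => A ^ i * A) atTop (nhds (E * A)) :=
      h.mul tendsto_const_nhds
    have heq : (fun i : ℕ => A ^ i * A) = fun i : ℕ => A ^ (i + 1) := by
      funext i; rw [pow_succ]
    rw [heq] at h2
    exact tendsto_nhds_unique h2 h1
  have hEE : E * E = E := by
    have h2 : Tendsto (fun i : ℕ => A ^ i * A ^ i) atTop (nhds (E * E)) := h.mul h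
    have heq : (fun i : ℕ => A ^ i * A ^ i) = fun i : ℕ => A ^ (i + i) := by
      funext i; rw [pow_add]
    rw [heq] at h2
    have h3 : Tendsto (fun i : ℕ => A ^ (i + i)) atTop (nhds E) :=
      h.comp (tendsto_atTop_mono (fun i => Nat.le_add_left i i) tendsto_id)
    exact tendsto_nhds_unique h2 h3
  refine ⟨hEE, hAE, hEA, ?_⟩
  -- powers of A absorb E
  have hpow : ∀ n : ℕ, A ^ (n + 1) * E = E := by
    intro n
    induction n with
    | zero => simpa using hAE
    | succ n ih => rw [pow_succ, mul_assoc, hAE, ih]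
  -- (A - E) ^ (n+1) = A ^ (n+1) - E
  have hsub : ∀ n : ℕ, (A - E) ^ (n + 1) = A ^ (n + 1) - E := by
    intro n
    induction n with
    | zero => simp
    | succ n ih =>
      rw [pow_succ, ih, sub_mul, mul_sub, mul_sub, hpow n, hEA, hEE, ← pow_succ]
      abel
  set B : Matrix (Fin N) (Fin N) ℂ := (A - E).map (algebraMap ℝ ℂ) with hB
  have hBpow : ∀ n : ℕ, B ^ (n + 1) = (A ^ (n + 1) - E).map (algebraMap ℝ ℂ) := by
    intro n
    have hBm : B = (algebraMap ℝ ℂ).mapMatrix (A - E) := by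
      rw [RingHom.mapMatrix_apply]
    rw [hBm, ← map_pow, hsub, RingHom.mapMatrix_apply]
  -- entrywise convergence to 0
  have hent : ∀ j k : Fin N, Tendsto (fun i : ℕ => |(A ^ (i + 1) - E) j k|)
      atTop (nhds 0) := by
    intro j k
    have h2 : Tendsto (fun i : ℕ => (A ^ (i + 1)) j k) atTop (nhds (E j k)) :=
      (h1.apply_nhds j).apply_nhds k
    have h3 := (h2.sub_const (E j k)).abs
    simpa [Matrix.sub_apply] using h3
  rcases Nat.eq_zero_or_pos N with hN | hN
  · -- N = 0 : spectrum is empty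
    subst hN
    have hsing : Subsingleton (Matrix (Fin 0) (Fin 0) ℂ) :=
      ⟨fun a b => by ext i j; exact i.elim0⟩
    have hspec : spectrum ℂ B = ∅ := by
      ext μ
      simp only [Set.mem_empty_iff_false, iff_false, spectrum.mem_iff, not_not]
      exact @isUnit_of_subsingleton _ _ hsing _
    rw [spectralRadius, hspec]
    simp
  · -- main case
    set ε : ℝ := 1 / (2 * N) with hε
    have hεpos : 0 < ε := by positivity
    have hev : ∀ᶠ i : ℕ in atTop, ∀ j k : Fin N, |(A ^ (i + 1) - E) j k| ≤ ε := by
      rw [eventually_all]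
      intro j
      rw [eventually_all]
      intro k
      exact ((hent j k).eventually_lt_const hεpos).mono fun i hi => hi.le
    obtain ⟨n, hn⟩ := hev.exists
    -- every spectral value μ satisfies ‖μ‖ ^ (n+1) ≤ 1/2
    have hkey : ∀ μ ∈ spectrum ℂ B, ‖μ‖ ^ (n + 1) ≤ 1 / 2 := by
      intro μ hμ
      rw [spectrum.mem_iff, Algebra.algebraMap_eq_smul_one] at hμ
      rw [Matrix.isUnit_iff_isUnit_det, isUnit_iff_ne_zero, not_not] at hμ
      obtain ⟨v, hv0, hv⟩ := (Matrix.exists_mulVec_eq_zero_iff).2 hμ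
      have hvB : B *ᵥ v = μ • v := by
        rw [Matrix.sub_mulVec, sub_eq_zero] at hv
        rw [← hv, Matrix.smul_mulVec, Matrix.one_mulVec]
      have hvBn : ∀ m : ℕ, B ^ m *ᵥ v = μ ^ m • v := by
        intro m
        induction m with
        | zero => simp
        | succ m ih =>
          rw [pow_succ, ← Matrix.mulVec_mulVec, hvB, Matrix.mulVec_smul, ih,
            smul_smul, ← pow_succ']
      obtain ⟨j, -, hj⟩ := Finset.exists_max_image Finset.univ (fun j => ‖v j‖)
        ⟨⟨0, hN⟩, Finset.mem_univ _⟩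
      have hvj : 0 < ‖v j‖ := by
        by_contra hc
        push_neg at hc
        apply hv0
        funext k
        have hk := (hj k (Finset.mem_univ k)).trans hc
        simpa using norm_le_zero_iff.mp hk
      have hrow : ‖(B ^ (n + 1) *ᵥ v) j‖ ≤ 1 / 2 * ‖v j‖ := by
        have hterm : ∀ k : Fin N, ‖(B ^ (n + 1)) j k * v k‖ ≤ ε * ‖v j‖ := by
          intro k
          rw [norm_mul]
          have hBjk : ‖(B ^ (n + 1)) j k‖ ≤ ε := by
            rw [hBpow n, Matrix.map_apply,
              show (algebraMap ℝ ℂ) ((A ^ (n + 1) - E) j k)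
                = (((A ^ (n + 1) - E) j k : ℝ) : ℂ) from rfl,
              Complex.norm_real, Real.norm_eq_abs]
            exact hn j k
          exact mul_le_mul hBjk (hj k (Finset.mem_univ k)) (norm_nonneg _) hεpos.le
        calc ‖(B ^ (n + 1) *ᵥ v) j‖ = ‖∑ k : Fin N, (B ^ (n + 1)) j k * v k‖ := by
              simp [Matrix.mulVec, dotProduct]
          _ ≤ ∑ k : Fin N, ‖(B ^ (n + 1)) j k * v k‖ := norm_sum_le _ _
          _ ≤ ∑ _k : Fin N, ε * ‖v j‖ := Finset.sum_le_sum fun k _ => hterm k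
          _ = N * (ε * ‖v j‖) := by simp [Finset.sum_const]
          _ = 1 / 2 * ‖v j‖ := by
              rw [hε]
              field_simp
      rw [hvBn (n + 1)] at hrow
      have hfin : ‖μ‖ ^ (n + 1) * ‖v j‖ ≤ 1 / 2 * ‖v j‖ := by
        simpa [norm_smul, norm_pow] using hrow
      exact le_of_mul_le_mul_right hfin hvj
    -- conclude about the spectral radius
    set r : NNReal := (2 : NNReal)⁻¹ ^ ((n + 1 : ℝ)⁻¹) with hr
    have hr1 : r < 1 := NNReal.rpow_lt_one
      (by rw [← NNReal.coe_lt_coe]; norm_num) (by positivity)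
    have hle : spectralRadius ℂ B ≤ (r : ENNReal) := by
      rw [spectralRadius]
      refine iSup₂_le fun μ hμ => ?_
      rw [ENNReal.coe_le_coe, ← NNReal.coe_le_coe]
      have hμn := hkey μ hμ
      have hrc : (r : ℝ) = (2 : ℝ)⁻¹ ^ ((n + 1 : ℝ)⁻¹) := by
        rw [hr]
        push_cast [NNReal.coe_rpow]
        norm_num
      have hne : ((n : ℝ) + 1) ≠ 0 := by positivity
      have hμeq : ‖μ‖ = (‖μ‖ ^ (n + 1) : ℝ) ^ ((n + 1 : ℝ)⁻¹) := by
        rw [← Real.rpow_natCast ‖μ‖ (n + 1), ← Real.rpow_mul (norm_nonneg μ)]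
        push_cast
        rw [mul_inv_cancel₀ hne, Real.rpow_one]
      rw [coe_nnnorm, hrc, hμeq]
      exact Real.rpow_le_rpow (by positivity) (by linarith) (by positivity)
    calc spectralRadius ℂ B ≤ (r : ENNReal) := hle
      _ < 1 := by exact_mod_cast hr1
end

section
/- Suppose A E_WZ = E_WZ and E_WZ A = E_WZ, and define w^o = E_WZ y for a vector y ∈ R^N. If w_i = A w_{i-1} with w_{-1} = y, then the error vector w̃_i := w^o - w_i satisfies the recursion w̃_i = (A - E_WZ) w̃_{i-1} for all i ≥ 0; consequently, if additionally ρ(A - E_WZ) < 1, then w_i → w^o. -/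
open Matrix Filter

attribute [local instance] Matrix.linftyOpNormedAddCommGroup Matrix.linftyOpNormedRing
  Matrix.linftyOpNormedAlgebra Matrix.linftyOpNormedSpace

lemma nnnorm_map_algebraMap {n : ℕ} (M : Matrix (Fin n) (Fin n) ℝ) :
    ‖M.map (algebraMap ℝ ℂ)‖₊ = ‖M‖₊ := by
  simp [Matrix.linfty_opNNNorm_def, Matrix.map_apply]

lemma pow_nnnorm_eventually_le {n : ℕ} (M : Matrix (Fin n) (Fin n) ℝ)
    (h : spectralRadius ℂ (M.map (algebraMap ℝ ℂ)) < 1) :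
    ∃ r : NNReal, r < 1 ∧ ∀ᶠ k : ℕ in atTop, ‖M ^ k‖₊ ≤ r ^ k := by
  set B := M.map (algebraMap ℝ ℂ)
  obtain ⟨c, hc1, hc2⟩ := exists_between h
  have hctop : c ≠ ⊤ := (hc2.trans_le le_top).ne
  have hgel := spectrum.pow_nnnorm_pow_one_div_tendsto_nhds_spectralRadius B
  have hev : ∀ᶠ k : ℕ in atTop, (‖B ^ k‖₊ : ENNReal) ^ (1 / (k : ℝ)) < c :=
    hgel.eventually_lt_const hc1
  refine ⟨c.toNNReal, ?_, ?_⟩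
  · have := hc2
    rwa [← ENNReal.coe_lt_one_iff, ENNReal.coe_toNNReal hctop]
  · filter_upwards [hev, eventually_ge_atTop 1] with k hk hk1
    have hk0 : (k : ℝ) ≠ 0 := by positivity
    have : ((‖B ^ k‖₊ : ENNReal) ^ (1 / (k : ℝ))) ^ (k : ℝ) ≤ c ^ (k : ℝ) :=
      ENNReal.rpow_le_rpow hk.le (by positivity)
    rw [← ENNReal.rpow_mul, one_div, inv_mul_cancel₀ hk0,
      ENNReal.rpow_one, ENNReal.rpow_natCast] at this
    have hBM : ‖B ^ k‖₊ = ‖M ^ k‖₊ := by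
      have hmp := map_pow ((algebraMap ℝ ℂ).mapMatrix) M k
      simp only [RingHom.mapMatrix_apply] at hmp
      rw [show B ^ k = (M ^ k).map (algebraMap ℝ ℂ) from hmp.symm, nnnorm_map_algebraMap]
    rw [hBM, ← ENNReal.coe_toNNReal hctop, ← ENNReal.coe_pow] at this
    exact_mod_cast this

theorem error_recursion_and_convergence {N : ℕ}
    (A E : Matrix (Fin N) (Fin N) ℝ)
    (hE : E * E = E)
    (h1 : A * E = E) (h2 : E * A = E)
    (y : Fin N → ℝ)
    (w : ℕ → Fin N → ℝ)
    (hw0 : w 0 = y)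
    (hwrec : ∀ i : ℕ, w (i + 1) = A.mulVec (w i)) :
    (∀ i : ℕ, E.mulVec y - w (i + 1) = (A - E).mulVec (E.mulVec y - w i)) ∧
    (spectralRadius ℂ ((A - E).map (algebraMap ℝ ℂ)) < 1 →
      Tendsto (fun i : ℕ => w i) atTop (nhds (E.mulVec y))) := by
  have key : ∀ i : ℕ, E.mulVec (w i) = E.mulVec y := by
    intro i
    induction i with
    | zero => rw [hw0]
    | succ i ih =>
        rw [hwrec i, Matrix.mulVec_mulVec, h2, ih]
  have part1 : ∀ i : ℕ, E.mulVec y - w (i + 1) = (A - E).mulVec (E.mulVec y - w i) := by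
    intro i
    rw [Matrix.sub_mulVec, Matrix.mulVec_sub, Matrix.mulVec_sub, Matrix.mulVec_mulVec, h1,
      Matrix.mulVec_mulVec, hE, key i, hwrec i]
    abel
  refine ⟨part1, fun hρ => ?_⟩
  set e : ℕ → Fin N → ℝ := fun i => E.mulVec y - w i with he
  have hepow : ∀ i : ℕ, e i = ((A - E) ^ i).mulVec (e 0) := by
    intro i
    induction i with
    | zero => simp
    | succ i ih =>
        have hstep : e (i + 1) = (A - E).mulVec (e i) := part1 i
        rw [hstep, ih, Matrix.mulVec_mulVec, ← pow_succ']
  obtain ⟨r, hr1, hrev⟩ := pow_nnnorm_eventually_le (A - E) hρ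
  have he0 : Tendsto e atTop (nhds 0) := by
    refine squeeze_zero_norm' (a := fun i => (r : ℝ) ^ i * ‖e 0‖) ?_ ?_
    · filter_upwards [hrev] with i hi
      rw [hepow i]
      calc ‖((A - E) ^ i).mulVec (e 0)‖ ≤ ‖(A - E) ^ i‖ * ‖e 0‖ :=
            Matrix.linfty_opNorm_mulVec _ _
        _ ≤ (r : ℝ) ^ i * ‖e 0‖ := by
            gcongr
            exact_mod_cast hi
    · have : Tendsto (fun i : ℕ => (r : ℝ) ^ i) atTop (nhds 0) :=
        tendsto_pow_atTop_nhds_zero_of_lt_one r.coe_nonneg (by exact_mod_cast hr1)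
      simpa using this.mul_const ‖e 0‖
  have : Tendsto (fun i => E.mulVec y - e i) atTop (nhds (E.mulVec y - 0)) :=
    tendsto_const_nhds.sub he0
  simpa [he] using this
end

section
/- The matrix E' := I - P_Z^perp (I - E_WZ) equals the orthogonal projector onto the column space of D = [W Z]: E' = D (D^T D)^{-1} D^T. -/
/-!
Write `Q = 1 - Z Zᵀ` and `Y = Wᵀ Q W`. Then `E' = Z Zᵀ + Q W Y⁻¹ Wᵀ Q` is symmetric, fixes the columns
of `D = [W Z]` and has its range inside that of `D`; any such matrix is `D (Dᵀ D)⁻¹ Dᵀ`. The Gram matrix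
`Dᵀ D` is invertible because its Schur complement with respect to `Zᵀ Z = 1` is `Y`.
-/

open Matrix

namespace Matrix

variable {R m n p l : Type*} [CommRing R] [Fintype m] [Fintype n] [Fintype p] [Fintype l]

theorem eq_mul_inv_mul_transpose_of_isSymm [DecidableEq n] {M : Matrix m m R} {D : Matrix m n R}
    {X : Matrix n m R} (hD : IsUnit (Dᵀ * D)) (hM : M.IsSymm) (hMD : M * D = D)
    (hrange : M = D * X) : M = D * (Dᵀ * D)⁻¹ * Dᵀ := by
  have hDM : Dᵀ * M = Dᵀ := by
    simpa only [transpose_mul, hM.eq] using congrArg transpose hMD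
  calc M = D * ((Dᵀ * D)⁻¹ * (Dᵀ * D)) * X := by
        rw [nonsing_inv_mul _ ((isUnit_iff_isUnit_det _).mp hD), Matrix.mul_one, hrange]
    _ = D * (Dᵀ * D)⁻¹ * (Dᵀ * M) := by rw [hrange]; simp only [Matrix.mul_assoc]
    _ = D * (Dᵀ * D)⁻¹ * Dᵀ := by rw [hDM]

variable [DecidableEq m] [DecidableEq p] (W : Matrix m p R) {Z : Matrix m l R}

omit [Fintype m] [DecidableEq p] in
theorem isSymm_one_sub_mul_transpose (Z : Matrix m l R) : (1 - Z * Zᵀ).IsSymm := by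
  simp only [IsSymm, transpose_sub, transpose_one, transpose_mul, transpose_transpose]

theorem isSymm_add_mul_inv_mul (Z : Matrix m l R) :
    (Z * Zᵀ + (1 - Z * Zᵀ) * W * (Wᵀ * (1 - Z * Zᵀ) * W)⁻¹ * Wᵀ * (1 - Z * Zᵀ)).IsSymm := by
  have hQ := (isSymm_one_sub_mul_transpose Z).eq
  have hY : (Wᵀ * (1 - Z * Zᵀ) * W).IsSymm := by
    simp only [IsSymm, transpose_mul, transpose_transpose, hQ, Matrix.mul_assoc]
  simp only [IsSymm, transpose_add, transpose_mul, transpose_transpose, hQ, hY.inv.eq]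
  simp only [Matrix.mul_assoc]

theorem add_mul_inv_mul_eq_fromCols_mul (Z : Matrix m l R) :
    Z * Zᵀ + (1 - Z * Zᵀ) * W * (Wᵀ * (1 - Z * Zᵀ) * W)⁻¹ * Wᵀ * (1 - Z * Zᵀ)
      = fromCols W Z * fromRows ((Wᵀ * (1 - Z * Zᵀ) * W)⁻¹ * Wᵀ * (1 - Z * Zᵀ))
          (Zᵀ - Zᵀ * W * (Wᵀ * (1 - Z * Zᵀ) * W)⁻¹ * Wᵀ * (1 - Z * Zᵀ)) := by
  rw [fromCols_mul_fromRows]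
  simp only [Matrix.sub_mul, Matrix.mul_sub, Matrix.one_mul, Matrix.mul_assoc]
  abel

variable [DecidableEq l]

theorem det_transpose_fromCols_mul_fromCols (hZ : Zᵀ * Z = 1) :
    ((fromCols W Z)ᵀ * fromCols W Z).det = (Wᵀ * (1 - Z * Zᵀ) * W).det := by
  rw [transpose_fromCols, fromRows_mul_fromCols, hZ, det_fromBlocks_one₂₂]
  simp only [Matrix.mul_sub, Matrix.sub_mul, Matrix.mul_one, Matrix.mul_assoc]

theorem one_sub_mul_transpose_mul_self (hZ : Zᵀ * Z = 1) : (1 - Z * Zᵀ) * Z = 0 := by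
  rw [Matrix.sub_mul, Matrix.mul_assoc, hZ, Matrix.mul_one, Matrix.one_mul, sub_self]

theorem add_mul_inv_mul_mul_fromCols (hZ : Zᵀ * Z = 1) (hY : IsUnit (Wᵀ * (1 - Z * Zᵀ) * W)) :
    (Z * Zᵀ + (1 - Z * Zᵀ) * W * (Wᵀ * (1 - Z * Zᵀ) * W)⁻¹ * Wᵀ * (1 - Z * Zᵀ)) * fromCols W Z
      = fromCols W Z := by
  have hYY : (Wᵀ * (1 - Z * Zᵀ) * W)⁻¹ * (Wᵀ * (1 - Z * Zᵀ) * W) = 1 :=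
    nonsing_inv_mul _ ((isUnit_iff_isUnit_det _).mp hY)
  have hfixW : (Z * Zᵀ + (1 - Z * Zᵀ) * W * (Wᵀ * (1 - Z * Zᵀ) * W)⁻¹ * Wᵀ * (1 - Z * Zᵀ)) * W = W := by
    simp only [Matrix.add_mul, Matrix.mul_assoc] at hYY ⊢
    rw [hYY, Matrix.mul_one, Matrix.sub_mul, Matrix.one_mul, Matrix.mul_assoc, add_sub_cancel]
  have hfixZ : (Z * Zᵀ + (1 - Z * Zᵀ) * W * (Wᵀ * (1 - Z * Zᵀ) * W)⁻¹ * Wᵀ * (1 - Z * Zᵀ)) * Z = Z := by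
    rw [Matrix.add_mul, Matrix.mul_assoc _ (1 - Z * Zᵀ), one_sub_mul_transpose_mul_self hZ,
      Matrix.mul_zero, add_zero, Matrix.mul_assoc, hZ, Matrix.mul_one]
  rw [mul_fromCols, hfixW, hfixZ]

end Matrix

theorem Eprime_eq_orthogonal_projector_general {N P L : ℕ}
    (W : Matrix (Fin N) (Fin P) ℝ) (Z : Matrix (Fin N) (Fin L) ℝ)
    (hZ : Zᵀ * Z = 1)
    (hY : IsUnit (Wᵀ * (1 - Z * Zᵀ) * W)) :
    1 - (1 - Z * Zᵀ) * (1 - W * (Wᵀ * (1 - Z * Zᵀ) * W)⁻¹ * Wᵀ * (1 - Z * Zᵀ)) =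
      fromCols W Z * ((fromCols W Z)ᵀ * fromCols W Z)⁻¹ * (fromCols W Z)ᵀ := by
  have hD : IsUnit ((fromCols W Z)ᵀ * fromCols W Z) := by
    rw [isUnit_iff_isUnit_det, det_transpose_fromCols_mul_fromCols W hZ, ← isUnit_iff_isUnit_det]
    exact hY
  have hE : 1 - (1 - Z * Zᵀ) * (1 - W * (Wᵀ * (1 - Z * Zᵀ) * W)⁻¹ * Wᵀ * (1 - Z * Zᵀ))
      = Z * Zᵀ + (1 - Z * Zᵀ) * W * (Wᵀ * (1 - Z * Zᵀ) * W)⁻¹ * Wᵀ * (1 - Z * Zᵀ) := by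
    simp only [Matrix.mul_sub, Matrix.mul_one, Matrix.mul_assoc]
    abel
  rw [hE]
  exact eq_mul_inv_mul_transpose_of_isSymm hD (isSymm_add_mul_inv_mul W Z)
    (add_mul_inv_mul_mul_fromCols W hZ hY) (add_mul_inv_mul_eq_fromCols_mul W Z)

theorem Eprime_eq_orthogonal_projector {N P L : ℕ}
    (W : Matrix (Fin N) (Fin P) ℝ) (Z : Matrix (Fin N) (Fin L) ℝ)
    (hW : Wᵀ * W = 1) (hZ : Zᵀ * Z = 1)
    (hrank : (fromCols W Z).rank = P + L)
    (hY : IsUnit (Wᵀ * (1 - Z * Zᵀ) * W))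
    (hD : IsUnit ((fromCols W Z)ᵀ * fromCols W Z)) :
    1 - (1 - Z * Zᵀ) * (1 - W * (Wᵀ * (1 - Z * Zᵀ) * W)⁻¹ * Wᵀ * (1 - Z * Zᵀ)) =
      fromCols W Z * ((fromCols W Z)ᵀ * fromCols W Z)⁻¹ * (fromCols W Z)ᵀ :=
  Eprime_eq_orthogonal_projector_general W Z hZ hY
end

section
/- Let A be an N×N real matrix with A E = E, E A = E for an idempotent matrix E, and ρ(A - E) < 1. Then for any ν ∈ (0,1), the matrix I - (1-ν)A is invertible, ν A (I - (1-ν)A)^{-1} = ν Σ_{j=0}^∞ ((1-ν)A)^j A, and lim_{ν→0+} ν A (I - (1-ν)A)^{-1} = E. -/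
/-!
With `B = A - E` we have `E * B = B * E = 0`, hence `(E + B) ^ k = E + B ^ k * (1 - E)`, and the
geometric series of `(1 - ν) • A` splits as `ν⁻¹ • E + (1 - (1 - ν) • B)⁻¹ * (1 - E)`. The second
part converges because `ρ(B) < 1`: the Taylor series at `0` of the holomorphic function
`z ↦ (1 - z • B)⁻¹` has radius `ρ(B)⁻¹ > 1`. Multiplying by `ν • A` gives
`E + ν • ((1 - (1 - ν) • B)⁻¹ * B)`, which tends to `E` because `1 - B` is invertible and matrix
inversion is continuous there.
-/

open Matrix Filter

open scoped NNReal ENNReal Topology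

theorem hasSum_smul_pow_of_nnnorm_lt_inv_spectralRadius {A : Type*} [NormedRing A]
    [NormedAlgebra ℂ A] [CompleteSpace A] {a : A} {z : ℂ}
    (hz : (‖z‖₊ : ℝ≥0∞) < (spectralRadius ℂ a)⁻¹) :
    HasSum (fun n => z ^ n • a ^ n) (Ring.inverse (1 - z • a)) := by
  obtain ⟨r, hzr, hr⟩ := ENNReal.lt_iff_exists_nnreal_btwn.mp hz
  have hr0 : 0 < r := by exact_mod_cast (zero_le).trans_lt hzr
  -- `z ↦ (1 - z • a)⁻¹` is holomorphic on the disc of radius `r`, so its Taylor series at `0`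
  -- converges there.
  have hball := (spectrum.differentiableOn_inverse_one_sub_smul hr).hasFPowerSeriesOnBall hr0
  have hseries := (spectrum.hasFPowerSeriesOnBall_inverse_one_sub_smul ℂ a).exchange_radius hball
  simpa [ContinuousMultilinearMap.mkPiRing_apply] using hseries.hasSum (y := z)
    (by simpa [Metric.mem_eball, edist_zero_right] using
      NNReal.coe_lt_coe.mpr (ENNReal.coe_lt_coe.mp hzr))

theorem IsIdempotentElem.add_pow_of_mul_eq_zero {R : Type*} [Ring R] {e b : R}
    (he : IsIdempotentElem e) (heb : e * b = 0) (hbe : b * e = 0) (n : ℕ) :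
    (e + b) ^ n = e + b ^ n * (1 - e) := by
  have hce : (1 - e) * e = 0 := by rw [sub_mul, one_mul, he.eq, sub_self]
  have hcb : (1 - e) * b = b := by rw [sub_mul, one_mul, heb, sub_zero]
  induction n with
  | zero => simp
  | succ n ih =>
    rw [pow_succ, ih, pow_succ, add_mul, mul_add, mul_add, he.eq, heb, mul_assoc, mul_assoc,
      hce, hcb, mul_sub, mul_one, mul_assoc, hbe]
    simp

theorem IsIdempotentElem.hasSum_smul_add_pow {R : Type*} [Ring R] [Algebra ℝ R]
    [TopologicalSpace R] [IsTopologicalRing R] [ContinuousSMul ℝ R] {e b : R}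
    (he : IsIdempotentElem e) (heb : e * b = 0) (hbe : b * e = 0) {t : ℝ} (ht : |t| < 1)
    {s : R} (hs : HasSum (fun k => (t • b) ^ k) s) :
    HasSum (fun k => (t • (e + b)) ^ k) ((1 - t)⁻¹ • e + s * (1 - e)) := by
  have hterm : ∀ k, (t • (e + b)) ^ k = t ^ k • e + (t • b) ^ k * (1 - e) := fun k => by
    rw [smul_pow, smul_pow, he.add_pow_of_mul_eq_zero heb hbe, smul_add, smul_mul_assoc]
  simpa only [hterm] using
    ((hasSum_geometric_of_abs_lt_one ht).smul_const e).add (hs.mul_right (1 - e))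

theorem Summable.isUnit_one_sub {R : Type*} [Ring R] [TopologicalSpace R] [IsTopologicalRing R]
    [T2Space R] {x : R} (h : Summable (x ^ ·)) : IsUnit (1 - x) :=
  ⟨⟨1 - x, _, h.one_sub_mul_tsum_pow, h.tsum_pow_mul_one_sub⟩, rfl⟩

namespace Matrix

variable {n : Type*} [Fintype n] [DecidableEq n]

theorem inv_one_sub_eq_tsum_pow {R : Type*} [CommRing R] [TopologicalSpace R]
    [IsTopologicalRing R] [T2Space R] {M : Matrix n n R} (h : Summable (M ^ ·)) :
    (1 - M)⁻¹ = ∑' k, M ^ k :=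
  inv_eq_left_inv h.tsum_pow_mul_one_sub

theorem mul_inv_one_sub_eq_tsum_pow_mul {R : Type*} [CommRing R] [TopologicalSpace R]
    [IsTopologicalRing R] [T2Space R] {M X : Matrix n n R} (h : Summable (M ^ ·))
    (hX : Commute X M) : X * (1 - M)⁻¹ = (∑' k, M ^ k) * X := by
  rw [inv_one_sub_eq_tsum_pow h, (Commute.tsum_right X fun k => hX.pow_right k).eq]

theorem continuousAt_inv_of_isUnit {𝕜 : Type*} [NormedField 𝕜] {M : Matrix n n 𝕜}
    (hM : IsUnit M) : ContinuousAt Inv.inv M :=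
  continuousAt_matrix_inv M
    (NormedRing.inverse_continuousAt ((isUnit_iff_isUnit_det M).mp hM).unit)

theorem tendsto_smul_inv_one_sub_smul_mul {𝕜 : Type*} [NormedField 𝕜] {B : Matrix n n 𝕜}
    (hB : IsUnit (1 - B)) :
    Tendsto (fun c : 𝕜 => c • ((1 - (1 - c) • B)⁻¹ * B)) (𝓝 0) (𝓝 0) := by
  have hinv : ContinuousAt (fun c : 𝕜 => (1 - (1 - c) • B)⁻¹) 0 :=
    ContinuousAt.comp (f := fun c : 𝕜 => 1 - (1 - c) • B)
      (by simpa using continuousAt_inv_of_isUnit hB) (by fun_prop)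
  have hcont : ContinuousAt (fun c : 𝕜 => c • ((1 - (1 - c) • B)⁻¹ * B)) 0 :=
    continuousAt_id.smul (hinv.mul continuousAt_const)
  simpa using hcont.tendsto

theorem summable_smul_pow_of_spectralRadius_lt_one
    {M : Matrix n n ℝ} (hM : spectralRadius ℂ (M.map (algebraMap ℝ ℂ)) < 1) {t : ℝ}
    (ht : |t| ≤ 1) : Summable fun k => (t • M) ^ k := by
  -- Any Banach algebra norm on complex matrices will do: the spectral radius does not see it.
  let : NormedRing (Matrix n n ℂ) := Matrix.linftyOpNormedRing
  let : NormedAlgebra ℂ (Matrix n n ℂ) := Matrix.linftyOpNormedAlgebra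
  have hz : (‖(t : ℂ)‖₊ : ℝ≥0∞) < (spectralRadius ℂ (M.map (algebraMap ℝ ℂ)))⁻¹ := by
    refine lt_of_le_of_lt ?_ (ENNReal.one_lt_inv.mpr hM)
    rw [Complex.nnnorm_real, ENNReal.coe_le_one_iff, ← NNReal.coe_le_one, coe_nnnorm]
    simpa using ht
  have hsum := (hasSum_smul_pow_of_nnnorm_lt_inv_spectralRadius hz).summable.map
    (Complex.reAddGroupHom.mapMatrix : Matrix n n ℂ →+ Matrix n n ℝ)
    (continuous_id.matrix_map Complex.continuous_re)
  convert hsum using 2 with k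
  ext i j
  simp only [Function.comp_apply, smul_pow]
  rw [← Matrix.map_pow]
  simp [← Complex.ofReal_pow]

theorem hasSum_pow_one_sub_smul {A E : Matrix n n ℝ} (hE : IsIdempotentElem E)
    (hAE : A * E = E) (hEA : E * A = E)
    (hρ : spectralRadius ℂ ((A - E).map (algebraMap ℝ ℂ)) < 1) {ν : ℝ} (hν₀ : 0 < ν)
    (hν₁ : ν < 1) :
    HasSum (fun k => ((1 - ν) • A) ^ k) (ν⁻¹ • E + (1 - (1 - ν) • (A - E))⁻¹ * (1 - E)) := by
  have hEB : E * (A - E) = 0 := by rw [mul_sub, hEA, hE.eq, sub_self]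
  have hBE : (A - E) * E = 0 := by rw [sub_mul, hAE, hE.eq, sub_self]
  have ht : |1 - ν| < 1 := abs_lt.mpr ⟨by linarith, by linarith⟩
  have hsum := summable_smul_pow_of_spectralRadius_lt_one hρ ht.le
  rw [inv_one_sub_eq_tsum_pow hsum]
  simpa using hE.hasSum_smul_add_pow hEB hBE ht hsum.hasSum

end Matrix

theorem smoothing_resolvent_limit {N : ℕ}
    (A E : Matrix (Fin N) (Fin N) ℝ)
    (hE : E * E = E)
    (h1 : A * E = E) (h2 : E * A = E)
    (h3 : spectralRadius ℂ ((A - E).map (algebraMap ℝ ℂ)) < 1) :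
    (∀ ν : ℝ, 0 < ν → ν < 1 →
      IsUnit (1 - (1 - ν) • A) ∧
      ν • (A * (1 - (1 - ν) • A)⁻¹) =
        ν • ((∑' j : ℕ, ((1 - ν) • A) ^ j) * A)) ∧
    Tendsto (fun ν : ℝ => ν • (A * (1 - (1 - ν) • A)⁻¹))
      (nhdsWithin 0 (Set.Ioi 0)) (nhds E) := by
  have hsum := fun ν (hν₀ : 0 < ν) (hν₁ : ν < 1) => hasSum_pow_one_sub_smul hE h1 h2 h3 hν₀ hν₁
  have hres : ∀ ν : ℝ, 0 < ν → ν < 1 →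
      ν • (A * (1 - (1 - ν) • A)⁻¹) = ν • ((∑' j : ℕ, ((1 - ν) • A) ^ j) * A) :=
    fun ν hν₀ hν₁ => by
      rw [mul_inv_one_sub_eq_tsum_pow_mul (hsum ν hν₀ hν₁).summable
        ((Commute.refl A).smul_right _)]
  refine ⟨fun ν hν₀ hν₁ => ⟨(hsum ν hν₀ hν₁).summable.isUnit_one_sub, hres ν hν₀ hν₁⟩, ?_⟩
  have hunit : IsUnit (1 - (A - E)) := by
    simpa using (summable_smul_pow_of_spectralRadius_lt_one h3 (t := 1) (by simp)).isUnit_one_sub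
  have hlim := tendsto_const_nhds (x := E) |>.add (tendsto_smul_inv_one_sub_smul_mul hunit)
  rw [add_zero] at hlim
  refine (hlim.mono_left nhdsWithin_le_nhds).congr' ?_
  filter_upwards [Ioo_mem_nhdsGT one_pos] with ν ⟨hν₀, hν₁⟩
  rw [hres ν hν₀ hν₁, (hsum ν hν₀ hν₁).tsum_eq, add_mul, mul_assoc, sub_mul, one_mul, h2,
    smul_mul_assoc, h2, smul_add, smul_inv_smul₀ hν₀.ne']
end

section
/- If A E = E, E A = E, and ρ(A - E) < 1 for an idempotent matrix E, then every eigenvalue of A is either equal to 1 or has modulus strictly less than 1, and the eigenvalue 1 has algebraic multiplicity equal to rank(E). -/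
open Matrix Polynomial

private lemma mem_spectrum_iff_exists_vec {N : ℕ} (M : Matrix (Fin N) (Fin N) ℂ) (μ : ℂ) :
    μ ∈ spectrum ℂ M ↔ ∃ v ≠ 0, M.mulVec v = μ • v := by
  rw [spectrum.mem_iff, Matrix.isUnit_iff_isUnit_det, isUnit_iff_ne_zero, not_ne_iff,
    ← Matrix.exists_mulVec_eq_zero_iff]
  refine exists_congr fun v => and_congr_right fun hv => ?_
  rw [Algebra.algebraMap_eq_smul_one, Matrix.sub_mulVec, Matrix.smul_mulVec,
    Matrix.one_mulVec, sub_eq_zero, eq_comm]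

private lemma isRoot_charpoly_iff_mem_spectrum {N : ℕ} (M : Matrix (Fin N) (Fin N) ℂ) (μ : ℂ) :
    M.charpoly.IsRoot μ ↔ μ ∈ spectrum ℂ M := by
  have h : (charmatrix M).map (eval μ) = μ • (1 : Matrix (Fin N) (Fin N) ℂ) - M := by
    ext i j
    by_cases h : i = j <;>
      simp [h, charmatrix_apply_eq, charmatrix_apply_ne, Matrix.one_apply]
  rw [spectrum.mem_iff, Matrix.isUnit_iff_isUnit_det, isUnit_iff_ne_zero, not_ne_iff,
    Algebra.algebraMap_eq_smul_one, IsRoot, Matrix.charpoly, ← Polynomial.coe_evalRingHom,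
    RingHom.map_det, RingHom.mapMatrix_apply, coe_evalRingHom, h]

private lemma sum_eq_count_one {s : Multiset ℂ} (h : ∀ x ∈ s, x = 0 ∨ x = 1) :
    s.sum = (s.count 1 : ℂ) := by
  induction s using Multiset.induction_on with
  | empty => simp
  | cons a s ih =>
    rw [Multiset.sum_cons, Multiset.count_cons,
      ih (fun x hx => h x (Multiset.mem_cons_of_mem hx))]
    rcases h a (Multiset.mem_cons_self a s) with rfl | rfl <;> simp [add_comm]

private lemma trace_eq_rank {N : ℕ} (E : Matrix (Fin N) (Fin N) ℝ) (hE : E * E = E) :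
    Matrix.trace E = (E.rank : ℝ) := by
  have hproj : LinearMap.IsProj (LinearMap.range E.mulVecLin) E.mulVecLin := by
    constructor
    · intro x; exact LinearMap.mem_range_self _ x
    · rintro x ⟨y, rfl⟩
      simp only [Matrix.mulVecLin_apply, Matrix.mulVec_mulVec, hE]
  have := hproj.trace
  rw [LinearMap.trace_eq_matrix_trace ℝ (Pi.basisFun ℝ (Fin N)),
    LinearMap.toMatrix_eq_toMatrix'] at this
  rw [Matrix.rank, ← this]
  exact (congrArg Matrix.trace (LinearMap.toMatrix'_toLin' E)).symm

set_option maxHeartbeats 1000000 in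
theorem eigenvalue_structure_of_A {N : ℕ}
    (A E : Matrix (Fin N) (Fin N) ℝ)
    (hE : E * E = E)
    (h1 : A * E = E) (h2 : E * A = E)
    (h3 : spectralRadius ℂ ((A - E).map (algebraMap ℝ ℂ)) < 1) :
    (∀ μ ∈ spectrum ℂ (A.map (algebraMap ℝ ℂ)), μ = 1 ∨ ‖μ‖ < 1) ∧
    (A.map (algebraMap ℝ ℂ)).charpoly.rootMultiplicity 1 = E.rank := by
  set A' := A.map (algebraMap ℝ ℂ) with hA'
  set E' := E.map (algebraMap ℝ ℂ) with hE'
  set B' := A' - E' with hB'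
  have hBA : (A - E).map (algebraMap ℝ ℂ) = B' := by
    rw [hB', hA', hE', Matrix.map_sub _ (fun a b => map_sub (algebraMap ℝ ℂ) a b)]
  rw [hBA] at h3
  have hE2 : E' * E' = E' := by rw [hE', ← Matrix.map_mul, hE]
  have h1' : A' * E' = E' := by rw [hA', hE', ← Matrix.map_mul, h1]
  have h2' : E' * A' = E' := by rw [hA', hE', ← Matrix.map_mul, h2]
  have hBE : B' * E' = 0 := by rw [hB', sub_mul, h1', hE2, sub_self]
  -- all spectrum elements of B' have norm < 1
  have hspecB : ∀ μ ∈ spectrum ℂ B', ‖μ‖ < 1 := by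
    intro μ hμ
    have hle : (‖μ‖₊ : ENNReal) ≤ spectralRadius ℂ B' :=
      le_iSup₂ (f := fun (k : ℂ) (_ : k ∈ spectrum ℂ B') => (‖k‖₊ : ENNReal)) μ hμ
    have hlt := lt_of_le_of_lt hle h3
    rw [← ENNReal.coe_one, ENNReal.coe_lt_coe] at hlt
    simpa [← NNReal.coe_lt_coe] using hlt
  have hone_not : (1 : ℂ) ∉ spectrum ℂ B' := fun h => by simpa using hspecB 1 h
  constructor
  · intro μ hμ
    by_cases hμ1 : μ = 1
    · exact Or.inl hμ1
    right
    apply hspecB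
    rw [mem_spectrum_iff_exists_vec] at hμ ⊢
    obtain ⟨v, hv, hAv⟩ := hμ
    have hEv : E'.mulVec v = 0 := by
      have h5 : E'.mulVec (A'.mulVec v) = E'.mulVec v := by
        rw [Matrix.mulVec_mulVec, h2']
      rw [hAv, Matrix.mulVec_smul] at h5
      have : (μ - 1) • E'.mulVec v = 0 := by
        rw [sub_smul, one_smul, h5, sub_self]
      rcases smul_eq_zero.mp this with h | h
      · exact absurd (sub_eq_zero.mp h) hμ1
      · exact h
    exact ⟨v, hv, by rw [hB', Matrix.sub_mulVec, hEv, sub_zero, hAv]⟩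
  · -- charpoly identity
    have hA'' : A' = B' + E' := by rw [hB', sub_add_cancel]
    have hcm : charmatrix B' * charmatrix E' = (X : ℂ[X]) • charmatrix A' := by
      have hs : ∀ M : Matrix (Fin N) (Fin N) ℂ,
          charmatrix M = (X : ℂ[X]) • (1 : Matrix (Fin N) (Fin N) ℂ[X]) - M.map C := by
        intro M; ext i j
        by_cases h : i = j <;>
          simp [h, charmatrix_apply_eq, charmatrix_apply_ne, Matrix.one_apply]
      have h0 : (B'.map C) * (E'.map C) = 0 := by
        rw [← Matrix.map_mul, hBE, Matrix.map_zero _ (map_zero C)]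
      rw [hs, hs, hs, hA'', Matrix.map_add _ (fun a b => map_add C a b)]
      rw [sub_mul, mul_sub, mul_sub, smul_mul_assoc, one_mul, smul_mul_assoc, one_mul,
        mul_smul_comm, mul_one, h0, smul_sub, smul_add]
      abel
    have hdet : B'.charpoly * E'.charpoly = X ^ N * A'.charpoly := by
      have := congrArg Matrix.det hcm
      rwa [Matrix.det_mul, Matrix.det_smul, Fintype.card_fin] at this
    have hBne : B'.charpoly ≠ 0 := B'.charpoly_monic.ne_zero
    have hEne : E'.charpoly ≠ 0 := E'.charpoly_monic.ne_zero
    have hAne : A'.charpoly ≠ 0 := A'.charpoly_monic.ne_zero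
    have hmul : rootMultiplicity 1 (B'.charpoly * E'.charpoly)
        = rootMultiplicity 1 B'.charpoly + rootMultiplicity 1 E'.charpoly :=
      rootMultiplicity_mul (mul_ne_zero hBne hEne)
    have hmul2 : rootMultiplicity 1 ((X : ℂ[X]) ^ N * A'.charpoly)
        = rootMultiplicity 1 ((X : ℂ[X]) ^ N) + rootMultiplicity 1 A'.charpoly :=
      rootMultiplicity_mul (mul_ne_zero (pow_ne_zero _ X_ne_zero) hAne)
    have hXN : rootMultiplicity 1 ((X : ℂ[X]) ^ N) = 0 := by
      rw [rootMultiplicity_eq_zero_iff]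
      intro h
      simp [IsRoot] at h
    have hB0 : rootMultiplicity 1 B'.charpoly = 0 := by
      rw [rootMultiplicity_eq_zero_iff]
      intro h
      exact (hone_not ((isRoot_charpoly_iff_mem_spectrum B' 1).mp h)).elim
    have key : rootMultiplicity 1 E'.charpoly = rootMultiplicity 1 A'.charpoly := by
      have := congrArg (rootMultiplicity 1) hdet
      rw [hmul, hmul2, hXN, hB0] at this
      simpa using this
    rw [← key]
    -- now: rootMultiplicity 1 E'.charpoly = E.rank
    have hroots : ∀ x ∈ E'.charpoly.roots, x = 0 ∨ x = 1 := by
      intro x hx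
      have hx' : x ∈ spectrum ℂ E' :=
        (isRoot_charpoly_iff_mem_spectrum E' x).mp (isRoot_of_mem_roots hx)
      rw [mem_spectrum_iff_exists_vec] at hx'
      obtain ⟨v, hv, hEv⟩ := hx'
      have : E'.mulVec (E'.mulVec v) = E'.mulVec v := by
        rw [Matrix.mulVec_mulVec, hE2]
      rw [hEv, Matrix.mulVec_smul, hEv, smul_smul] at this
      have h6 : (x * x - x) • v = 0 := by rw [sub_smul, this, sub_self]
      rcases smul_eq_zero.mp h6 with h | h
      · have : x * (x - 1) = 0 := by ring_nf; linear_combination h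
        rcases mul_eq_zero.mp this with h | h
        · exact Or.inl h
        · exact Or.inr (sub_eq_zero.mp h)
      · exact absurd h hv
    have hsum : E'.charpoly.roots.sum = (E'.charpoly.roots.count 1 : ℂ) :=
      sum_eq_count_one hroots
    have htr : Matrix.trace E' = E'.charpoly.roots.sum :=
      Matrix.trace_eq_sum_roots_charpoly E'
    have hcount : E'.charpoly.roots.count 1 = rootMultiplicity 1 E'.charpoly :=
      (count_roots _).trans rfl
    have htrmap : Matrix.trace E' = ((Matrix.trace E : ℝ) : ℂ) := by
      rw [hE']
      exact (AddMonoidHom.map_trace (algebraMap ℝ ℂ).toAddMonoidHom E).symm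
    have : ((E.rank : ℝ) : ℂ) = (rootMultiplicity 1 E'.charpoly : ℂ) := by
      rw [← trace_eq_rank E hE, ← htrmap, htr, hsum, hcount]
    have : (E.rank : ℂ) = (rootMultiplicity 1 E'.charpoly : ℂ) := by
      exact_mod_cast this
    exact_mod_cast this.symm
end
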